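/- With P, T, d_T as above and the κ-weight grading on P ∨̂ T by number of κ's: every d_T-closed element of κ-weight one is d_T-exact; more precisely, if λ has κ-weight one and d_T(λ) = 0, then there is a unique ρ of κ-weight zero in P ∨̂ [α] with λ = d_T(ρ). I.e., the κ-weight-one homology of (P ∨̂ T, d_T) vanishes. -/

import Mathlib

/-! Closedness of a κ-weight-one element `λ` says that its value on a configuration
(α-slots `S`, κ-slot `c`) does not change when the κ-slot is exchanged with one of the
α-slots, so `λ (S, c)` depends only on `S ∪ {c}`. Hence `ρ T := λ (T \ {min T}, min T)` is a
primitive, and it is the only one, because `d_T ρ` evaluated at `(T \ {min T}, min T)` is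
`ρ T`. -/

section

variable (P : ℕ → Type*) [∀ n, AddCommGroup (P n)]

/-- κ-weight-zero, `a`-α component of arity `n` of `P ∨̂ T`. -/
abbrev E0 (n a : ℕ) := {S : Finset (Fin (n + a)) // S.card = a} → P (n + a)

/-- κ-weight-one, `a`-α component of arity `n` of `P ∨̂ T`. -/
abbrev E1 (n a : ℕ) :=
  {q : Finset (Fin (n + (a + 1))) × Fin (n + (a + 1)) //
    q.1.card = a ∧ q.2 ∉ q.1} → P (n + (a + 1))

/-- κ-weight-two, `a`-α component of arity `n` of `P ∨̂ T` (the two κ-slots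
are recorded in increasing order). -/
abbrev E2 (n a : ℕ) :=
  {t : Finset (Fin (n + (a + 2))) × Fin (n + (a + 2)) × Fin (n + (a + 2)) //
    t.1.card = a ∧ t.2.1 < t.2.2 ∧ t.2.1 ∉ t.1 ∧ t.2.2 ∉ t.1} → P (n + (a + 2))

/-- `d_T` from κ-weight zero to κ-weight one (replace an `α` by `κ`). -/
def dT0 {n a : ℕ} (lam : E0 P n (a + 1)) : E1 P n a := fun q =>
  lam ⟨insert q.1.2 q.1.1, by
    rw [Finset.card_insert_of_notMem q.2.2, q.2.1]⟩

/-- `d_T` from κ-weight one to κ-weight two (replace one of the `α`'s by `κ`;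
the relative Koszul sign of the two orderings of the odd generators `κ` is
`−1`). -/
def dT1 {n a : ℕ} (lam : E1 P n (a + 1)) : E2 P n a := fun t =>
  match t with
  | ⟨(A, c1, c2), hA, hlt, h1, h2⟩ =>
      lam ⟨(insert c2 A, c1), by
          refine ⟨by rw [Finset.card_insert_of_notMem h2, hA], ?_⟩
          simp only [Finset.mem_insert, not_or]
          exact ⟨Fin.ne_of_lt hlt, h1⟩⟩
        - lam ⟨(insert c1 A, c2), by
          refine ⟨by rw [Finset.card_insert_of_notMem h1, hA], ?_⟩
          simp only [Finset.mem_insert, not_or]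
          exact ⟨Fin.ne_of_gt hlt, h2⟩⟩

theorem Finset.exists_eq_insert_swap_of_insert_eq {ι : Type*} [DecidableEq ι]
    {S S' : Finset ι} {c c' : ι} (hc : c ∉ S) (hc' : c' ∉ S') (hne : c ≠ c')
    (h : insert c S = insert c' S') :
    ∃ A, c ∉ A ∧ c' ∉ A ∧ S = insert c' A ∧ S' = insert c A := by
  have hc'S : c' ∈ S := by
    have : c' ∈ insert c S := h ▸ Finset.mem_insert_self c' S'
    exact (Finset.mem_insert.1 this).resolve_left hne.symm
  have hS' : S' = (insert c S).erase c' := by rw [h, Finset.erase_insert hc']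
  refine ⟨S.erase c', ?_, Finset.notMem_erase c' S, (Finset.insert_erase hc'S).symm, ?_⟩
  · exact fun hcA => hc (Finset.mem_of_mem_erase hcA)
  · rw [hS', Finset.erase_insert_of_ne hne]

/-- The index set of `E1`: the α-slots `q.1` and the κ-slot `q.2`. -/
abbrev MarkedSubset (ι : Type*) (k : ℕ) :=
  {q : Finset ι × ι // q.1.card = k ∧ q.2 ∉ q.1}

def splitMin {ι : Type*} [LinearOrder ι] {k : ℕ} (T : {S : Finset ι // S.card = k + 1}) :
    MarkedSubset ι k :=
  have hT : T.1.Nonempty := Finset.card_pos.1 (by omega)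
  ⟨(T.1.erase (T.1.min' hT), T.1.min' hT),
    by rw [Finset.card_erase_of_mem (T.1.min'_mem hT), T.2]; rfl, Finset.notMem_erase _ _⟩

theorem insert_splitMin {ι : Type*} [LinearOrder ι] {k : ℕ}
    (T : {S : Finset ι // S.card = k + 1}) :
    insert (splitMin T).1.2 (splitMin T).1.1 = T.1 :=
  Finset.insert_erase (Finset.min'_mem T.1 (Finset.card_pos.1 (by omega)))

theorem MarkedSubset.eq_of_insert_eq {ι : Type*} [DecidableEq ι] {k : ℕ}
    {q q' : MarkedSubset ι k} (hc : q.1.2 = q'.1.2)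
    (h : insert q.1.2 q.1.1 = insert q'.1.2 q'.1.1) : q = q' := by
  refine Subtype.ext (Prod.ext ?_ hc)
  rw [← Finset.erase_insert q.2.2, ← Finset.erase_insert q'.2.2, h, hc]

theorem apply_eq_of_dT1_eq_zero {n a : ℕ} {μ : E1 P n (a + 1)} (hμ : dT1 P μ = 0)
    {q q' : MarkedSubset (Fin (n + (a + 2))) (a + 1)} (hne : q.1.2 ≠ q'.1.2)
    (h : insert q.1.2 q.1.1 = insert q'.1.2 q'.1.1) : μ q = μ q' := by
  wlog hlt : q.1.2 < q'.1.2 generalizing q q'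
  · exact (this hne.symm h.symm (lt_of_le_of_ne (not_lt.1 hlt) hne.symm)).symm
  obtain ⟨A, hcA, hc'A, hS, hS'⟩ :=
    Finset.exists_eq_insert_swap_of_insert_eq q.2.2 q'.2.2 hne h
  have hA : A.card = a := by
    have := q.2.1
    rw [hS, Finset.card_insert_of_notMem hc'A] at this
    omega
  have hexchange := congrFun hμ ⟨(A, q.1.2, q'.1.2), hA, hlt, hcA, hc'A⟩
  simp only [dT1, Pi.zero_apply, sub_eq_zero] at hexchange
  convert hexchange using 2
  · exact Subtype.ext (Prod.ext hS rfl)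
  · exact Subtype.ext (Prod.ext hS' rfl)

theorem apply_eq_of_forall_dT1_eq_zero {n : ℕ} {lam : ∀ a, E1 P n a}
    (hclosed : ∀ a, dT1 P (lam (a + 1)) = 0) {a : ℕ}
    {q q' : MarkedSubset (Fin (n + (a + 1))) a}
    (h : insert q.1.2 q.1.1 = insert q'.1.2 q'.1.1) : lam a q = lam a q' := by
  by_cases hc : q.1.2 = q'.1.2
  · rw [MarkedSubset.eq_of_insert_eq hc h]
  cases a with
  | zero =>
    obtain ⟨A, -, -, hS, -⟩ := Finset.exists_eq_insert_swap_of_insert_eq q.2.2 q'.2.2 hc h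
    exact absurd (Finset.card_eq_zero.1 q.2.1) (hS ▸ Finset.insert_ne_empty _ _)
  | succ b => exact apply_eq_of_dT1_eq_zero P (hclosed b) hc h

/-- every `d_T`-closed element of κ-weight one of `P ∨̂ T` is
`d_T`-exact, with a unique κ-weight-zero primitive in `P ∨̂ [α]` of positive
α-filtration: the κ-weight-one homology of `(P ∨̂ T, d_T)` vanishes. -/
theorem stmt_9 (n : ℕ) (lam : ∀ a, E1 P n a)
    (hclosed : ∀ a, dT1 P (lam (a + 1)) = 0) :
    ∃! ρ : ∀ a, E0 P n (a + 1), ∀ a, dT0 P (ρ a) = lam a := by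
  refine ⟨fun a T => lam a (splitMin T), fun a => funext fun q => ?_, fun ρ hρ => ?_⟩
  · exact apply_eq_of_forall_dT1_eq_zero P hclosed (insert_splitMin _)
  · funext a T
    rw [← hρ a]
    exact congrArg (ρ a) (Subtype.ext (insert_splitMin T).symm)

end
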